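/- arXiv:1205.1462 — 2 statements merged into one kernel-verified Lean document; each statement's English description precedes it below -/
import Mathlib

section
/- (List decodability of the CRT code.) Let p_1 < p_2 < ⋯ < p_n denote the first n primes and let 1 ≤ k ≤ n. Consider the Chinese Remainder Theorem code mapping each integer x ∈ {0, 1, …, p_1⋯p_k − 1} to the vector (x mod p_1, …, x mod p_n). Then for every vector z with z_i ∈ {0, …, p_i − 1} for each i, the number of integers x ∈ {0, 1, …, p_1⋯p_k − 1} such that |{i ∈ [n] : x ≡ z_i (mod p_i)}| ≥ √((k−1)·n) is at most 2·(p_1 + p_2 + ⋯ + p_n). Equivalently, the CRT code is (1 − √((k−1)/n), 2·∑_{i=1}^n p_i)-list decodable. -/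
/-!
Encode each symbol of a word one-hot, so that a word over alphabets `αᵢ` becomes a vector of
`ℝ^(∑ |αᵢ|)` and inner products count agreements. Any `k` of the primes have product at least
`p₁⋯p_k`, so distinct CRT codewords agree in at most `k - 1` places. For the codewords `c`
in the list, the vectors `oneHot c - r • oneHot z` with `r = √((k - 1) / n)` are then nonzero
and pairwise non-acute, and a real inner product space of dimension `D` contains at most `2D`
such vectors.
-/

open Finset Module

local notation "⟪" x ", " y "⟫" => @inner ℝ _ _ x y

section InnerNonpos

variable {ι E : Type*} [NormedAddCommGroup E] [InnerProductSpace ℝ E]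

/-- Finitely many proper hyperplanes do not cover a real vector space. -/
lemma exists_forall_inner_ne_zero [Finite ι] (v : ι → E) (hv : ∀ i, v i ≠ 0) :
    ∃ u : E, ∀ i, ⟪u, v i⟫ ≠ 0 := by
  by_contra! h
  have hcover : ⋃ i, ((ℝ ∙ v i)ᗮ : Set E) = Set.univ :=
    Set.eq_univ_of_forall fun u => by
      obtain ⟨i, hi⟩ := h u
      exact Set.mem_iUnion.2 ⟨i, Submodule.mem_orthogonal_singleton_iff_inner_left.2 hi⟩
  obtain ⟨i, hi⟩ := Subspace.exists_eq_top_of_iUnion_eq_univ hcover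
  rw [Submodule.orthogonal_eq_top_iff, Submodule.span_singleton_eq_bot] at hi
  exact hv i hi

/-- Split the vanishing combination into its positive and nonpositive parts `w = -w'`;
then `⟪w, w⟫ = -⟪w, w'⟫ ≤ 0`, so `w = 0`, and `⟪u, w⟫ = 0` forces the positive part to be
empty. -/
lemma nonpos_of_sum_smul_eq_zero [Fintype ι] {v : ι → E} {u : E} (hu : ∀ i, 0 < ⟪u, v i⟫)
    (hv : Pairwise fun i j => ⟪v i, v j⟫ ≤ 0) {g : ι → ℝ} (hg : ∑ i, g i • v i = 0) (i : ι) :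
    g i ≤ 0 := by
  by_contra! hi
  set w := ∑ j ∈ univ.filter (0 < g ·), g j • v j
  have hw : w = -∑ j ∈ univ.filter (¬0 < g ·), g j • v j :=
    eq_neg_of_add_eq_zero_left ((sum_filter_add_sum_filter_not _ _ _).trans hg)
  have hww : ⟪w, w⟫ ≤ 0 := by
    nth_rewrite 2 [hw]
    simp only [w, inner_neg_right, inner_sum, sum_inner, real_inner_smul_left,
      real_inner_smul_right]
    refine neg_nonpos.2 (sum_nonneg fun j hj => sum_nonneg fun l hl => ?_)
    rw [mem_filter] at hj hl
    have hlj : l ≠ j := fun h => hj.2 (h ▸ hl.2)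
    exact mul_nonneg_of_nonpos_of_nonpos (not_lt.1 hj.2)
      (mul_nonpos_of_nonneg_of_nonpos hl.2.le (hv hlj))
  have huw : 0 < ⟪u, w⟫ := by
    simp only [w, inner_sum, real_inner_smul_right]
    exact sum_pos (fun j hj => mul_pos (mem_filter.1 hj).2 (hu j)) ⟨i, by simpa using hi⟩
  rw [real_inner_self_nonpos.1 hww, inner_zero_right] at huw
  exact huw.false

lemma linearIndependent_of_pairwise_inner_nonpos [Fintype ι] {v : ι → E} {u : E}
    (hu : ∀ i, 0 < ⟪u, v i⟫) (hv : Pairwise fun i j => ⟪v i, v j⟫ ≤ 0) :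
    LinearIndependent ℝ v := by
  refine Fintype.linearIndependent_iff.2 fun g hg i => le_antisymm
    (nonpos_of_sum_smul_eq_zero hu hv hg i) ?_
  have hg' : ∑ j, (-g) j • v j = 0 := by simp [hg]
  simpa using nonpos_of_sum_smul_eq_zero hu hv hg' i

lemma card_filter_inner_pos_le_finrank [Fintype ι] [FiniteDimensional ℝ E] {v : ι → E}
    (hv : Pairwise fun i j => ⟪v i, v j⟫ ≤ 0) (u : E) :
    #{i | 0 < ⟪u, v i⟫} ≤ finrank ℝ E := by
  classical
  have hli := linearIndependent_of_pairwise_inner_nonpos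
    (v := fun i : {i // i ∈ univ.filter (0 < ⟪u, v ·⟫)} => v i) (u := u)
    (fun i => (mem_filter.1 i.2).2) (fun i j hij => hv (Subtype.coe_injective.ne hij))
  have := hli.fintype_card_le_finrank
  rwa [Fintype.card_coe] at this

theorem card_le_two_mul_finrank_of_pairwise_inner_nonpos [Fintype ι] [FiniteDimensional ℝ E]
    {v : ι → E} (hv0 : ∀ i, v i ≠ 0) (hv : Pairwise fun i j => ⟪v i, v j⟫ ≤ 0) :
    Fintype.card ι ≤ 2 * finrank ℝ E := by
  classical
  obtain ⟨u, hu⟩ := exists_forall_inner_ne_zero v hv0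
  have hsplit :
      univ ⊆ ({i | 0 < ⟪u, v i⟫} : Finset ι) ∪ ({i | 0 < ⟪-u, v i⟫} : Finset ι) := fun i _ => by
    simpa [inner_neg_left, or_comm] using (hu i).lt_or_gt
  calc Fintype.card ι ≤ #{i | 0 < ⟪u, v i⟫} + #{i | 0 < ⟪-u, v i⟫} :=
        (card_le_card hsplit).trans (card_union_le _ _)
    _ ≤ 2 * finrank ℝ E := by
      have h₁ := card_filter_inner_pos_le_finrank hv u
      have h₂ := card_filter_inner_pos_le_finrank hv (-u)
      omega

end InnerNonpos

section Johnson

variable {ι : Type*} [Fintype ι] {α : ι → Type*} [∀ i, Fintype (α i)] [∀ i, DecidableEq (α i)]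

noncomputable def oneHot (a : ∀ i, α i) : EuclideanSpace ℝ (Σ i, α i) :=
  WithLp.toLp 2 fun q => if q.2 = a q.1 then 1 else 0

lemma inner_oneHot (a b : ∀ i, α i) :
    ⟪oneHot a, oneHot b⟫ = #{i | a i = b i} := by
  simp [oneHot, PiLp.inner_apply, Fintype.sum_sigma, Finset.sum_boole]

lemma inner_oneHot_sub_smul (a b z : ∀ i, α i) (r : ℝ) :
    ⟪oneHot a - r • oneHot z, oneHot b - r • oneHot z⟫ =
      #{i | a i = b i} - r * #{i | a i = z i} - r * #{i | b i = z i}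
        + r ^ 2 * Fintype.card ι := by
  simp only [inner_sub_left, inner_sub_right, real_inner_smul_left, real_inner_smul_right]
  rw [real_inner_comm (oneHot b) (oneHot z)]
  simp only [inner_oneHot, eq_self, filter_true, card_univ]
  ring

/-- The Johnson bound on list size, for codes over mixed alphabets. -/
theorem card_le_two_mul_sum_card_of_agree {X : Type*} (c : X → ∀ i, α i) (z : ∀ i, α i)
    (L : Finset X) {d : ℕ} (hd : d < Fintype.card ι)
    (hL : ∀ x ∈ L, ∀ y ∈ L, x ≠ y → #{i | c x i = c y i} ≤ d)
    (hz : ∀ x ∈ L, √(d * Fintype.card ι) ≤ #{i | c x i = z i}) :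
    #L ≤ 2 * ∑ i, Fintype.card (α i) := by
  set n := Fintype.card ι
  have hn : (0 : ℝ) < n := by exact_mod_cast (Nat.zero_le d).trans_lt hd
  have hdn : (d : ℝ) < n := by exact_mod_cast hd
  -- the Johnson radius: `r` balances `r √(d n) = d` and `r² n = d`
  set r := √(d / n)
  have hr0 : 0 ≤ r := Real.sqrt_nonneg _
  have hr1 : r < 1 := by rw [Real.sqrt_lt' one_pos, one_pow, div_lt_one hn]; exact hdn
  have hr2 : r ^ 2 * n = d := by rw [Real.sq_sqrt (by positivity)]; field_simp
  have hrt : r * √(d * n) = d := by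
    rw [← Real.sqrt_mul (by positivity), show (d / n * (d * n) : ℝ) = d * d by field_simp,
      Real.sqrt_mul_self d.cast_nonneg]
  have hagree_le (a b : ∀ i, α i) : (#{i | a i = b i} : ℝ) ≤ n := by
    exact_mod_cast card_filter_le _ _
  have hrz : ∀ x ∈ L, (d : ℝ) ≤ r * #{i | c x i = z i} := fun x hx =>
    hrt ▸ mul_le_mul_of_nonneg_left (hz x hx) hr0
  set v : L → EuclideanSpace ℝ (Σ i, α i) := fun x => oneHot (c x) - r • oneHot z
  have hv_self (x : L) : 0 < ⟪v x, v x⟫ := by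
    rw [inner_oneHot_sub_smul, filter_true_of_mem fun _ _ => rfl, card_univ]
    nlinarith [mul_le_mul_of_nonneg_left (hagree_le (c x) z) hr0,
      mul_pos hn (mul_pos (sub_pos.2 hr1) (sub_pos.2 hr1))]
  have hv_pair : Pairwise fun x y => ⟪v x, v y⟫ ≤ 0 := fun x y hxy => by
    have hcxy : (#{i | c x i = c y i} : ℝ) ≤ d :=
      by exact_mod_cast hL x x.2 y y.2 (Subtype.coe_injective.ne hxy)
    show ⟪v x, v y⟫ ≤ 0
    rw [inner_oneHot_sub_smul]
    linarith [hrz x x.2, hrz y y.2]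
  have hv0 (x : L) : v x ≠ 0 := fun h => by simpa [h] using hv_self x
  simpa [finrank_euclideanSpace, Fintype.card_sigma] using
    card_le_two_mul_finrank_of_pairwise_inner_nonpos hv0 hv_pair

end Johnson

lemma prod_range_le_prod_of_card_eq {M : Type*} [CommMonoid M] [PartialOrder M]
    [IsOrderedMonoid M] {f : ℕ → M} (hf : Monotone f) (hf1 : ∀ i, 1 ≤ f i) :
    ∀ (k : ℕ) (B : Finset ℕ), #B = k → ∏ i ∈ range k, f i ≤ ∏ i ∈ B, f i
  | 0, B, _ => by simpa using one_le_prod' fun i _ => hf1 i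
  | k + 1, B, hB => by
    have hne : B.Nonempty := card_pos.1 (by omega)
    have hmax := B.max'_mem hne
    have hk : k ≤ B.max' hne := by
      have hsub : B ⊆ range (B.max' hne + 1) := fun a ha =>
        mem_range.2 (Nat.lt_succ_of_le (B.le_max' a ha))
      have := card_le_card hsub
      rw [hB, card_range] at this
      omega
    rw [prod_range_succ, ← mul_prod_erase B f hmax]
    exact (mul_le_mul' (prod_range_le_prod_of_card_eq hf hf1 k _
      (by rw [card_erase_of_mem hmax, hB]; rfl)) (hf hk)).trans_eq (mul_comm _ _)

lemma card_modEq_lt {ι : Type*} [Fintype ι] {m : ι → ℕ}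
    (hm : Pairwise fun i j => Nat.Coprime (m i) (m j)) {k M x y : ℕ}
    (hM : ∀ B : Finset ι, #B = k → M ≤ ∏ i ∈ B, m i)
    (hx : x < M) (hy : y < M) (hxy : x ≠ y) : #{i | x ≡ y [MOD m i]} < k := by
  by_contra! h
  obtain ⟨B, hBsub, hBcard⟩ := exists_subset_card_eq h
  have hmod : x ≡ y [MOD ∏ i ∈ B, m i] := by
    rw [Nat.modEq_iff_dvd, Nat.cast_prod]
    exact prod_dvd_of_coprime (fun i _ j _ hij => Nat.isCoprime_iff_coprime.2 (hm hij))
      fun i hi => Nat.modEq_iff_dvd.1 (mem_filter.1 (hBsub hi)).2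
  exact hxy (hmod.eq_of_lt_of_lt (hx.trans_le (hM B hBcard)) (hy.trans_le (hM B hBcard)))

lemma prod_range_nth_prime_le_prod {n k : ℕ} (B : Finset (Fin n)) (hB : #B = k) :
    ∏ i ∈ range k, Nat.nth Nat.Prime i ≤ ∏ i ∈ B, Nat.nth Nat.Prime i := by
  simpa using prod_range_le_prod_of_card_eq (Nat.nth_monotone Nat.infinite_setOfPred_prime)
    (fun i => (Nat.prime_nth_prime i).one_lt.le) k (B.map Fin.valEmbedding)
    (by rw [card_map, hB])

lemma pairwise_coprime_nth_prime :
    Pairwise fun i j => Nat.Coprime (Nat.nth Nat.Prime i) (Nat.nth Nat.Prime j) := fun i j hij =>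
  (Nat.coprime_primes (Nat.prime_nth_prime i) (Nat.prime_nth_prime j)).2
    ((Nat.nth_injective Nat.infinite_setOfPred_prime).ne hij)

/-- **List decodability of the CRT code (via the Johnson bound).**
Let `p_1 < ⋯ < p_n` be the first `n` primes (with `p_{i+1} = Nat.nth Nat.Prime i`) and
`1 ≤ k ≤ n`.  For every received word `z` with `z_i ∈ {0, …, p_i − 1}`, the number of
integers `x ∈ {0, …, p_1⋯p_k − 1}` whose CRT encoding `(x mod p_1, …, x mod p_n)` agrees
with `z` on at least `√((k−1)·n)` coordinates is at most `2·(p_1 + ⋯ + p_n)`; i.e. the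
CRT code is `(1 − √((k−1)/n), 2·∑ p_i)`-list decodable. -/
theorem crt_code_list_decodable (n k : ℕ) (hk1 : 1 ≤ k) (hkn : k ≤ n)
    (z : Fin n → ℕ) (hz : ∀ i : Fin n, z i < Nat.nth Nat.Prime i) :
    ({x : ℕ | x < ∏ i ∈ Finset.range k, Nat.nth Nat.Prime i ∧
        Real.sqrt (((k : ℝ) - 1) * n)
          ≤ ({i : Fin n | x % Nat.nth Nat.Prime i = z i}.ncard : ℝ)}.ncard : ℝ)
      ≤ 2 * ∑ i : Fin n, (Nat.nth Nat.Prime i : ℝ) := by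
  set p : Fin n → ℕ := fun i => Nat.nth Nat.Prime i
  let crt (x : ℕ) (i : Fin n) : Fin (p i) := ⟨x % p i, x.mod_lt (Nat.prime_nth_prime i).pos⟩
  have hagree (x : ℕ) : {i : Fin n | x % p i = z i}.ncard = #{i | crt x i = ⟨z i, hz i⟩} := by
    rw [← Set.ncard_coe_finset]; simp [crt, Fin.ext_iff]
  set L := (range (∏ i ∈ range k, Nat.nth Nat.Prime i)).filter fun x =>
    √(((k - 1 : ℕ) : ℝ) * n) ≤ #{i | crt x i = ⟨z i, hz i⟩}
  have hL : {x : ℕ | x < ∏ i ∈ range k, Nat.nth Nat.Prime i ∧ √(((k : ℝ) - 1) * n)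
      ≤ ({i : Fin n | x % p i = z i}.ncard : ℝ)} = L := by
    ext x; simp [L, hagree, Nat.cast_sub hk1]
  have hdist : ∀ x ∈ L, ∀ y ∈ L, x ≠ y → #{i | crt x i = crt y i} ≤ k - 1 := by
    intro x hx y hy hxy
    have hlt := card_modEq_lt (m := p)
      (fun i j hij => pairwise_coprime_nth_prime (Fin.val_injective.ne hij))
      prod_range_nth_prime_le_prod
      (mem_range.1 (mem_filter.1 hx).1) (mem_range.1 (mem_filter.1 hy).1) hxy
    have hcrt : #{i | crt x i = crt y i} = #{i | x ≡ y [MOD p i]} := by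
      congr 1; ext i; simp only [mem_filter, mem_univ, true_and, crt, Fin.ext_iff]; rfl
    omega
  have hcard := card_le_two_mul_sum_card_of_agree crt (fun i => ⟨z i, hz i⟩) L
    (by rw [Fintype.card_fin]; omega) hdist fun x hx => by simpa using (mem_filter.1 hx).2
  rw [hL, Set.ncard_coe_finset]
  simpa using (Nat.cast_le (α := ℝ)).2 hcard
end

section
/- (Zyablov–Pinsker.) Let q ≥ 2 and L ≥ 1 be integers and let ρ be a real number with 0 < ρ < 1 − 1/q. Then for every positive integer n there exists a code C ⊆ [q]^n that is (ρ, L)-list decodable and has |C| ≥ q^{n·(1 − H_q(ρ) − 1/L)}; i.e., there exists a (ρ, L)-list decodable q-ary code of rate at least 1 − H_q(ρ) − 1/L. -/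
/-!
Random coding with a union bound. Put `N = q^n`. A Hamming ball of relative radius
`ρ ≤ 1 - 1/q` holds at most `N^{H_q(ρ)}` words, so at most `N · N^{H_q(ρ)(L+1)} / (L+1)!`
sets of `L + 1` words lie in a common ball, and a code is `(ρ, L)`-list decodable as soon as
it contains none of them. A fixed `(L+1)`-set lies in a uniformly random `M`-subset of `[q]^n`
with probability at most `(M/N)^{L+1}`. For `M = ⌈N^{1 - H_q(ρ) - 1/L}⌉`, which is less than
`(3/2) N^{1 - H_q(ρ) - 1/L}` once `N^{1 - H_q(ρ) - 1/L} > L ≥ 2`, the expected number of bad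
sets inside the random code is below `N^{-1/L} (3/2)^{L+1} / (L+1)! ≤ 1`, so some `M`-subset
contains none. When `N^{1 - H_q(ρ) - 1/L} ≤ L` (in particular when `L = 1`) any code of that
size is trivially list decodable.
-/

/-- The `q`-ary entropy function
`H_q(x) = x·log_q(q−1) − x·log_q(x) − (1−x)·log_q(1−x)`. -/
noncomputable def qaryEntropy (q : ℕ) (x : ℝ) : ℝ :=
  x * Real.logb q ((q : ℝ) - 1) - x * Real.logb q x - (1 - x) * Real.logb q (1 - x)

open Finset

lemma qaryEntropy_eq_div_log (q : ℕ) (ρ : ℝ) :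
    qaryEntropy q ρ = Real.qaryEntropy q ρ / Real.log q := by
  simp only [qaryEntropy, Real.qaryEntropy, Real.binEntropy, Real.logb, Real.log_inv]
  push_cast
  ring

lemma qaryEntropy_nonneg (q : ℕ) {ρ : ℝ} (h0 : 0 ≤ ρ) (h1 : ρ ≤ 1) :
    0 ≤ qaryEntropy q ρ := by
  rw [qaryEntropy_eq_div_log]
  exact div_nonneg (Real.qaryEntropy_nonneg h0 h1) (Real.log_natCast_nonneg q)

lemma rpow_neg_qaryEntropy {q : ℕ} (hq : 2 ≤ q) {ρ : ℝ} (h0 : 0 < ρ) (h1 : ρ < 1) :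
    (q : ℝ) ^ (-qaryEntropy q ρ) = (ρ / (q - 1)) ^ ρ * (1 - ρ) ^ (1 - ρ) := by
  have hq' : (2 : ℝ) ≤ q := by exact_mod_cast hq
  have hlog : Real.log q ≠ 0 := (Real.log_pos (by linarith)).ne'
  have hq1 : (0 : ℝ) < q - 1 := by linarith
  rw [Real.rpow_def_of_pos (by linarith), Real.rpow_def_of_pos (div_pos h0 hq1),
    Real.rpow_def_of_pos (by linarith), ← Real.exp_add,
    Real.log_div h0.ne' hq1.ne']
  congr 1
  simp only [qaryEntropy, Real.logb]
  field_simp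
  ring

lemma rpow_mul_rpow_sub_le_of_le {a b : ℝ} (ha : 0 < a) (hab : a ≤ b) (t : ℝ) {x y : ℝ}
    (hxy : y ≤ x) : a ^ x * b ^ (t - x) ≤ a ^ y * b ^ (t - y) := by
  have hb : 0 < b := ha.trans_le hab
  have key (u : ℝ) : a ^ u * b ^ (t - u) = b ^ t * (a / b) ^ u := by
    rw [Real.rpow_sub hb, Real.div_rpow ha.le hb.le]
    ring
  rw [key, key]
  refine mul_le_mul_of_nonneg_left ?_ (by positivity)
  exact Real.rpow_le_rpow_of_exponent_ge (by positivity) ((div_le_one hb).2 hab) hxy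

lemma self_mul_rpow_one_sub_inv_pow_le {x : ℝ} (hx : 1 ≤ x) {L : ℕ} (hL : 1 ≤ L) :
    x * (x ^ (1 - 1 / L : ℝ)) ^ (L + 1) ≤ x ^ (L + 1) := by
  have hL' : (1 : ℝ) ≤ L := by exact_mod_cast hL
  calc x * (x ^ (1 - 1 / L : ℝ)) ^ (L + 1)
      = x ^ (1 + (1 - 1 / L) * (L + 1) : ℝ) := by
        rw [Real.rpow_add (by linarith), Real.rpow_one, Real.rpow_mul (by linarith),
          ← Nat.cast_add_one, Real.rpow_natCast]
    _ ≤ x ^ (L + 1 : ℝ) := by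
        refine Real.rpow_le_rpow_of_exponent_le hx ?_
        have : (1 - 1 / L : ℝ) * (L + 1) = L - 1 / L := by field_simp; ring
        have : 0 ≤ 1 / (L : ℝ) := by positivity
        linarith
    _ = x ^ (L + 1) := by rw [← Nat.cast_add_one, Real.rpow_natCast]

lemma Nat.choose_mul_pow_le_choose_mul_pow (K : ℕ) {M N : ℕ} (h : M ≤ N) :
    M.choose K * N ^ K ≤ N.choose K * M ^ K := by
  have key : M.descFactorial K * N ^ K ≤ N.descFactorial K * M ^ K := by
    have hpow (x : ℕ) : x ^ K = ∏ _i ∈ range K, x := by rw [prod_const, card_range]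
    rw [descFactorial_eq_prod_range, descFactorial_eq_prod_range, hpow N, hpow M,
      ← prod_mul_distrib, ← prod_mul_distrib]
    refine prod_le_prod' fun i _ => ?_
    rw [Nat.sub_mul, Nat.sub_mul, mul_comm N M]
    exact Nat.sub_le_sub_left (Nat.mul_le_mul_left i h) (M * N)
  rw [descFactorial_eq_factorial_mul_choose, descFactorial_eq_factorial_mul_choose, mul_assoc,
    mul_assoc] at key
  exact Nat.le_of_mul_le_mul_left key K.factorial_pos

lemma Nat.choose_sub_mul_pow_le {K M N : ℕ} (hKM : K ≤ M) (hMN : M ≤ N) :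
    (N - K).choose (M - K) * N ^ K ≤ N.choose M * M ^ K := by
  refine Nat.le_of_mul_le_mul_left ?_ (choose_pos (hKM.trans hMN))
  calc N.choose K * ((N - K).choose (M - K) * N ^ K)
      = N.choose M * (M.choose K * N ^ K) := by rw [← mul_assoc, ← choose_mul hKM]; ring
    _ ≤ N.choose M * (N.choose K * M ^ K) :=
        Nat.mul_le_mul_left _ (choose_mul_pow_le_choose_mul_pow K hMN)
    _ = N.choose K * (N.choose M * M ^ K) := by ring

lemma three_halves_pow_le_factorial {K : ℕ} (hK : 3 ≤ K) :
    (3 / 2 : ℝ) ^ K ≤ K.factorial := by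
  induction K, hK using Nat.le_induction with
  | base => norm_num [Nat.factorial]
  | succ K hK ih =>
    rw [pow_succ, Nat.factorial_succ, Nat.cast_mul, mul_comm ((K + 1 : ℕ) : ℝ)]
    have : (3 / 2 : ℝ) ≤ (K + 1 : ℕ) := by
      have : (3 : ℝ) ≤ K := by exact_mod_cast hK
      push_cast; linarith
    gcongr

section Hamming

variable {ι α : Type*} [Fintype ι] [DecidableEq α]

lemma prod_ite_eq_pow_hammingDist {R : Type*} [CommMonoid R] (c z : ι → α) (a b : R) :
    ∏ i, (if c i = z i then a else b) =
      a ^ (Fintype.card ι - hammingDist c z) * b ^ hammingDist c z := by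
  have hd : #{i | c i ≠ z i} = hammingDist c z := rfl
  have hs : #{i | c i = z i} = Fintype.card ι - hammingDist c z := by
    rw [← hd, ← card_univ, ← card_filter_add_card_filter_not (s := univ) (fun i => c i = z i)]
    simp
  rw [prod_ite, prod_const, prod_const, hs, hd]

lemma rpow_neg_qaryEntropy_le_prod_ite {q : ℕ} (hq : 2 ≤ q) {ρ : ℝ} (hρ0 : 0 < ρ)
    (hρ1 : ρ ≤ 1 - 1 / q) {c z : ι → α}
    (hd : (hammingDist c z : ℝ) ≤ ρ * Fintype.card ι) :
    ((q : ℝ) ^ Fintype.card ι) ^ (-qaryEntropy q ρ) ≤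
      ∏ i, if c i = z i then 1 - ρ else ρ / (q - 1) := by
  set n := Fintype.card ι
  have hq' : (2 : ℝ) ≤ q := by exact_mod_cast hq
  have hq1 : (0 : ℝ) < q - 1 := by linarith
  have hρ : ρ < 1 := hρ1.trans_lt (sub_lt_self _ (by positivity))
  have ha : 0 < ρ / (q - 1) := div_pos hρ0 hq1
  have hab : ρ / (q - 1) ≤ 1 - ρ := by
    have hρq : ρ * q ≤ q - 1 := calc
      ρ * q ≤ (1 - 1 / q) * q := by gcongr
      _ = q - 1 := by field_simp
    rw [div_le_iff₀ hq1]
    linear_combination hρq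
  have hdn : hammingDist c z ≤ n := hammingDist_le_card_fintype
  calc ((q : ℝ) ^ n) ^ (-qaryEntropy q ρ)
      = (ρ / (q - 1)) ^ (ρ * n) * (1 - ρ) ^ (n - ρ * n) := by
        rw [← Real.rpow_natCast, ← Real.rpow_mul (by positivity), mul_comm,
          Real.rpow_mul (by positivity), rpow_neg_qaryEntropy hq hρ0 hρ,
          Real.mul_rpow (Real.rpow_nonneg ha.le _) (Real.rpow_nonneg (by linarith) _),
          ← Real.rpow_mul ha.le, ← Real.rpow_mul (by linarith), sub_mul, one_mul]
    _ ≤ (ρ / (q - 1)) ^ (hammingDist c z : ℝ) * (1 - ρ) ^ (n - hammingDist c z : ℝ) :=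
        rpow_mul_rpow_sub_le_of_le ha hab _ hd
    _ = ∏ i, if c i = z i then 1 - ρ else ρ / (q - 1) := by
        rw [prod_ite_eq_pow_hammingDist, ← Nat.cast_sub hdn, Real.rpow_natCast,
          Real.rpow_natCast, mul_comm]

variable [DecidableEq ι] [Fintype α]

noncomputable def hammingBall (z : ι → α) (r : ℝ) : Finset (ι → α) :=
  {c | (hammingDist c z : ℝ) ≤ r}

theorem card_hammingBall_le (hα : 2 ≤ Fintype.card α) {ρ : ℝ} (hρ0 : 0 < ρ)
    (hρ1 : ρ ≤ 1 - 1 / Fintype.card α) (z : ι → α) :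
    (#(hammingBall z (ρ * Fintype.card ι)) : ℝ) ≤
      (Fintype.card (ι → α) : ℝ) ^ qaryEntropy (Fintype.card α) ρ := by
  set q := Fintype.card α
  set B := hammingBall z (ρ * Fintype.card ι)
  -- `w` is the law of a word obtained from `z` by keeping each letter with probability `1 - ρ`
  -- and otherwise replacing it by a uniformly random other letter.
  let w (i : ι) (x : α) : ℝ := if x = z i then 1 - ρ else ρ / (q - 1)
  have hq1 : (0 : ℝ) < q - 1 := by
    have : (2 : ℝ) ≤ q := by exact_mod_cast hα
    linarith
  have hw0 (i : ι) (x : α) : 0 ≤ w i x := by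
    have hρ : ρ < 1 := hρ1.trans_lt (sub_lt_self _ (by positivity))
    simp only [w]
    split_ifs
    exacts [by linarith, by positivity]
  have hw (i : ι) : ∑ x, w i x = 1 := by
    simp only [w, sum_ite, filter_eq', filter_ne', mem_univ, if_true, sum_const, card_singleton,
      card_erase_of_mem, card_univ, nsmul_eq_mul]
    rw [Nat.cast_sub (by omega : 1 ≤ q)]
    field_simp
    ring
  have hN : (0 : ℝ) < Fintype.card (ι → α) := by
    rw [Fintype.card_fun, Nat.cast_pow]; positivity
  rw [← mul_le_mul_iff_right₀ (Real.rpow_pos_of_pos hN (-qaryEntropy q ρ)),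
    ← Real.rpow_add hN, neg_add_cancel, Real.rpow_zero]
  calc (Fintype.card (ι → α) : ℝ) ^ (-qaryEntropy q ρ) * #B
      = ∑ c ∈ B, (Fintype.card (ι → α) : ℝ) ^ (-qaryEntropy q ρ) := by
        rw [sum_const, nsmul_eq_mul, mul_comm]
    _ ≤ ∑ c ∈ B, ∏ i, w i (c i) := sum_le_sum fun c hc => by
        rw [Fintype.card_fun, Nat.cast_pow]
        exact rpow_neg_qaryEntropy_le_prod_ite hα hρ0 hρ1 (by simpa [B, hammingBall] using hc)
    _ ≤ ∑ c : ι → α, ∏ i, w i (c i) :=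
        sum_le_sum_of_subset_of_nonneg (subset_univ _) fun c _ _ =>
          prod_nonneg fun i _ => hw0 i (c i)
    _ = 1 := by rw [← Fintype.prod_sum]; simp [hw]

end Hamming

lemma card_inter_le_of_forall_powersetCard_not_subset {β : Type*} [DecidableEq β]
    {C T : Finset β} {L : ℕ} (h : ∀ s ∈ powersetCard (L + 1) T, ¬ s ⊆ C) :
    #(C ∩ T) ≤ L := by
  by_contra! hL
  obtain ⟨s, hs, hcard⟩ := exists_subset_card_eq hL
  exact h s (mem_powersetCard.2 ⟨hs.trans inter_subset_right, hcard⟩)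
    (hs.trans inter_subset_left)

lemma card_biUnion_powersetCard_le {γ β : Type*} [DecidableEq β] (s : Finset γ)
    (f : γ → Finset β) (K : ℕ) {B : ℝ} (hB : ∀ z ∈ s, (#(f z) : ℝ) ≤ B) :
    (#(s.biUnion fun z => powersetCard K (f z)) : ℝ) ≤ #s * B ^ K / K.factorial := by
  calc (#(s.biUnion fun z => powersetCard K (f z)) : ℝ)
      ≤ ∑ z ∈ s, ((#(f z)).choose K : ℝ) := by
        simpa only [card_powersetCard, Nat.cast_sum] using
          (Nat.cast_le (α := ℝ)).2
            (card_biUnion_le (s := s) (t := fun z => powersetCard K (f z)))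
    _ ≤ ∑ z ∈ s, B ^ K / K.factorial := sum_le_sum fun z hz =>
        (Nat.choose_le_pow_div K _).trans (by gcongr; exact hB z hz)
    _ = #s * B ^ K / K.factorial := by rw [sum_const, nsmul_eq_mul, mul_div_assoc]

section Subsets

variable {β : Type*} [Fintype β] [DecidableEq β]

lemma card_filter_powersetCard_superset_le (s : Finset β) (M : ℕ) :
    #{C ∈ powersetCard M univ | s ⊆ C} ≤ (Fintype.card β - #s).choose (M - #s) := by
  calc #{C ∈ powersetCard M univ | s ⊆ C}
      ≤ #((powersetCard (M - #s) sᶜ).image (· ∪ s)) := by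
        refine card_le_card fun C hC => ?_
        obtain ⟨hCM, hsC⟩ := mem_filter.1 hC
        refine mem_image.2 ⟨C \ s, mem_powersetCard.2 ⟨?_, ?_⟩, sdiff_union_of_subset hsC⟩
        · exact sdiff_subset_sdiff (subset_univ _) le_rfl |>.trans (by rw [compl_eq_univ_sdiff])
        · rw [card_sdiff_of_subset hsC, (mem_powersetCard.1 hCM).2]
    _ ≤ #(powersetCard (M - #s) sᶜ) := card_image_le
    _ = (Fintype.card β - #s).choose (M - #s) := by rw [card_powersetCard, card_compl]

theorem exists_card_eq_forall_not_subset {K M : ℕ} (𝒮 : Finset (Finset β))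
    (h𝒮 : ∀ s ∈ 𝒮, #s = K)
    (h : #𝒮 * (Fintype.card β - K).choose (M - K) < (Fintype.card β).choose M) :
    ∃ C : Finset β, #C = M ∧ ∀ s ∈ 𝒮, ¬ s ⊆ C := by
  by_contra! hcover
  refine h.not_ge ?_
  calc (Fintype.card β).choose M
      = #(powersetCard M (univ : Finset β)) := by rw [card_powersetCard, card_univ]
    _ ≤ #(𝒮.biUnion fun s => {C ∈ powersetCard M univ | s ⊆ C}) := by
        refine card_le_card fun C hC => ?_
        obtain ⟨s, hs, hsC⟩ := hcover C (mem_powersetCard.1 hC).2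
        exact mem_biUnion.2 ⟨s, hs, mem_filter.2 ⟨hC, hsC⟩⟩
    _ ≤ ∑ s ∈ 𝒮, #{C ∈ powersetCard M univ | s ⊆ C} := card_biUnion_le
    _ ≤ ∑ s ∈ 𝒮, (Fintype.card β - K).choose (M - K) := sum_le_sum fun s hs => by
        simpa only [h𝒮 s hs] using card_filter_powersetCard_superset_le s M
    _ = #𝒮 * (Fintype.card β - K).choose (M - K) := by rw [sum_const, smul_eq_mul]

theorem exists_card_eq_forall_not_subset_of_mul_pow_lt {K M : ℕ} (𝒮 : Finset (Finset β))
    (h𝒮 : ∀ s ∈ 𝒮, #s = K) (hKM : K ≤ M)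
    (hM : M ≤ Fintype.card β) (h : #𝒮 * M ^ K < Fintype.card β ^ K) :
    ∃ C : Finset β, #C = M ∧ ∀ s ∈ 𝒮, ¬ s ⊆ C := by
  set N := Fintype.card β
  refine exists_card_eq_forall_not_subset 𝒮 h𝒮 (Nat.lt_of_mul_lt_mul_right (a := N ^ K) ?_)
  calc #𝒮 * (N - K).choose (M - K) * N ^ K
      ≤ #𝒮 * (N.choose M * M ^ K) := by
        rw [mul_assoc]; exact Nat.mul_le_mul_left _ (Nat.choose_sub_mul_pow_le hKM hM)
    _ = N.choose M * (#𝒮 * M ^ K) := by ring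
    _ < N.choose M * N ^ K := Nat.mul_lt_mul_of_pos_left h (Nat.choose_pos hM)

end Subsets

section ListDecoding

variable {ι α : Type*} [Fintype ι] [DecidableEq ι] [Fintype α] [DecidableEq α]

def IsListDecodable (C : Finset (ι → α)) (r : ℝ) (L : ℕ) : Prop :=
  ∀ z, #(C ∩ hammingBall z r) ≤ L

theorem exists_isListDecodable_card_eq (hα : 2 ≤ Fintype.card α) {L M : ℕ} (hL : 2 ≤ L)
    (hLM : L < M) (hMN : M ≤ Fintype.card (ι → α)) {ρ : ℝ} (hρ0 : 0 < ρ)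
    (hρ1 : ρ ≤ 1 - 1 / Fintype.card α)
    (hM : M < 3 / 2 *
      (Fintype.card (ι → α) : ℝ) ^ (1 - qaryEntropy (Fintype.card α) ρ - 1 / L)) :
    ∃ C : Finset (ι → α), #C = M ∧ IsListDecodable C (ρ * Fintype.card ι) L := by
  set N := Fintype.card (ι → α)
  set H := qaryEntropy (Fintype.card α) ρ
  set R := (N : ℝ) ^ (1 - H - 1 / L)
  set K := L + 1
  have hN : (1 : ℝ) ≤ N := by exact_mod_cast (by omega : 1 ≤ N)
  set 𝒮 := (univ : Finset (ι → α)).biUnion fun z =>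
    powersetCard K (hammingBall z (ρ * Fintype.card ι))
  have h𝒮 : ∀ s ∈ 𝒮, #s = K := by
    simp only [𝒮, mem_biUnion, mem_powersetCard]
    rintro s ⟨z, -, -, hs⟩
    exact hs
  have hbad : (#𝒮 : ℝ) ≤ N * (N ^ H) ^ K / K.factorial := by
    have := card_biUnion_powersetCard_le univ (fun z => hammingBall z (ρ * Fintype.card ι)) K
      fun z _ => card_hammingBall_le hα hρ0 hρ1 z
    rwa [card_univ] at this
  have hBR : (N : ℝ) ^ H * R = N ^ (1 - 1 / L : ℝ) := by
    rw [← Real.rpow_add (by linarith)]; ring_nf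
  have hfew : #𝒮 * M ^ K < N ^ K := by
    have hK : (3 / 2 : ℝ) ^ K ≤ K.factorial := three_halves_pow_le_factorial (by omega)
    have hfac : (0 : ℝ) < K.factorial := by exact_mod_cast K.factorial_pos
    suffices (#𝒮 : ℝ) * M ^ K < N ^ K by exact_mod_cast this
    calc (#𝒮 : ℝ) * M ^ K
        ≤ N * (N ^ H) ^ K / K.factorial * M ^ K := by gcongr
      _ < N * (N ^ H) ^ K / K.factorial * (3 / 2 * R) ^ K := by gcongr
      _ = N * (N ^ H * R) ^ K * ((3 / 2) ^ K / K.factorial) := by ring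
      _ ≤ N * (N ^ H * R) ^ K * 1 := by gcongr; exact (div_le_one hfac).2 hK
      _ ≤ N ^ K := by rw [mul_one, hBR]; exact self_mul_rpow_one_sub_inv_pow_le hN (by omega)
  obtain ⟨C, hC, hgood⟩ :=
    exists_card_eq_forall_not_subset_of_mul_pow_lt 𝒮 h𝒮 hLM hMN hfew
  exact ⟨C, hC, fun z => card_inter_le_of_forall_powersetCard_not_subset fun s hs =>
    hgood s (mem_biUnion.2 ⟨z, mem_univ z, hs⟩)⟩

theorem exists_isListDecodable_rpow_le_card (hα : 2 ≤ Fintype.card α) {L : ℕ} (hL : 1 ≤ L)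
    {ρ : ℝ} (hρ0 : 0 < ρ) (hρ1 : ρ ≤ 1 - 1 / Fintype.card α) :
    ∃ C : Finset (ι → α),
      (Fintype.card (ι → α) : ℝ) ^ (1 - qaryEntropy (Fintype.card α) ρ - 1 / L) ≤ #C ∧
      IsListDecodable C (ρ * Fintype.card ι) L := by
  set N := Fintype.card (ι → α)
  set H := qaryEntropy (Fintype.card α) ρ
  set R := (N : ℝ) ^ (1 - H - 1 / L)
  have : Nonempty α := Fintype.card_pos_iff.1 (by omega)
  have hN : (1 : ℝ) ≤ N := by exact_mod_cast Fintype.card_pos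
  have hH : 0 ≤ H := qaryEntropy_nonneg _ hρ0.le (hρ1.trans (sub_le_self _ (by positivity)))
  have hMN : ⌈R⌉₊ ≤ N := Nat.ceil_le.2 <| Real.rpow_le_self_of_one_le hN (by
    have : 0 ≤ 1 / (L : ℝ) := by positivity
    linarith)
  obtain hRL | hLR := le_or_gt R L
  · have hMN' : ⌈R⌉₊ ≤ #(univ : Finset (ι → α)) := by rwa [card_univ]
    obtain ⟨C, -, hC⟩ := exists_subset_card_eq hMN'
    exact ⟨C, hC ▸ Nat.le_ceil R, fun z =>
      (card_le_card inter_subset_left).trans (hC ▸ Nat.ceil_le.2 hRL)⟩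
  · -- for `L = 1` the target size `R = N ^ (-H)` is at most `1`
    have hL2 : 2 ≤ L := by
      by_contra! hL1
      obtain rfl : L = 1 := by omega
      refine hLR.not_ge ?_
      simpa using Real.rpow_le_one_of_one_le_of_nonpos hN (by simpa using hH)
    have hM : (⌈R⌉₊ : ℝ) < 3 / 2 * R := by
      have : (2 : ℝ) ≤ L := by exact_mod_cast hL2
      linarith [Nat.ceil_lt_add_one (hLR.le.trans' (Nat.cast_nonneg L))]
    obtain ⟨C, hC, hdec⟩ := exists_isListDecodable_card_eq hα hL2
      (by exact_mod_cast hLR.trans_le (Nat.le_ceil R)) hMN hρ0 hρ1 hM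
    exact ⟨C, hC ▸ Nat.le_ceil R, hdec⟩

end ListDecoding

theorem zyablov_pinsker_general (q L : ℕ) (hq : 2 ≤ q) (hL : 1 ≤ L)
    (ρ : ℝ) (hρ0 : 0 < ρ) (hρ1 : ρ < 1 - 1 / q)
    (n : ℕ) :
    ∃ C : Finset (Fin n → Fin q),
      (∀ z : Fin n → Fin q,
        {c ∈ (C : Set (Fin n → Fin q)) | (hammingDist c z : ℝ) ≤ ρ * n}.ncard ≤ L)
      ∧ (q : ℝ) ^ ((n : ℝ) * (1 - qaryEntropy q ρ - 1 / L)) ≤ (C.card : ℝ) := by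
  obtain ⟨C, hC, hdec⟩ := exists_isListDecodable_rpow_le_card (ι := Fin n) (α := Fin q)
    (by simpa using hq) hL hρ0 (by simpa using hρ1.le)
  refine ⟨C, fun z => ?_, ?_⟩
  · have hball : {c ∈ (C : Set (Fin n → Fin q)) | (hammingDist c z : ℝ) ≤ ρ * n} =
        ↑(C ∩ hammingBall z (ρ * Fintype.card (Fin n))) := by
      ext c; simp [hammingBall]
    rw [hball, Set.ncard_coe_finset]
    exact hdec z
  · simpa [Real.rpow_mul, Real.rpow_natCast] using hC

/-- **Zyablov–Pinsker.**  For integers `q ≥ 2`, `L ≥ 1` and real `0 < ρ < 1 − 1/q`,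
for every block length `n ≥ 1` there exists a `(ρ, L)`-list decodable code
`C ⊆ [q]^n` with `|C| ≥ q^{n·(1 − H_q(ρ) − 1/L)}`, i.e. of rate at least
`1 − H_q(ρ) − 1/L`. -/
theorem zyablov_pinsker (q L : ℕ) (hq : 2 ≤ q) (hL : 1 ≤ L)
    (ρ : ℝ) (hρ0 : 0 < ρ) (hρ1 : ρ < 1 - 1 / q)
    (n : ℕ) (hn : 0 < n) :
    ∃ C : Finset (Fin n → Fin q),
      (∀ z : Fin n → Fin q,
        {c ∈ (C : Set (Fin n → Fin q)) | (hammingDist c z : ℝ) ≤ ρ * n}.ncard ≤ L)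
      ∧ (q : ℝ) ^ ((n : ℝ) * (1 - qaryEntropy q ρ - 1 / L)) ≤ (C.card : ℝ) :=
  zyablov_pinsker_general q L hq hL ρ hρ0 hρ1 n
end
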